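/- Define, for real A and real m, the complex number K_m(A) = -e^{iπA} + e^{-iπA}·e^{4πmi/3} - e^{iπA}·e^{4πmi/3}. Let A₀, B₀ > 0 with A₀ + B₀ = 1. Then there exist δ > 0 and differentiable real-valued functions Θ₁(A,B), Θ₂(A,B) defined on {(A,B) : |A - A₀| + |B - B₀| < δ} such that Θ₁(A₀,B₀) = 1, Θ₂(A₀,B₀) = 2, and K_{Θ₂(A,B)}(A) + K_{Θ₁(A,B)}(B) = 0 for all (A,B) in that neighbourhood. Moreover, lim_{ε→0} (Θ₁(A₀, B₀ - ε) - 1)/ε = -(3/8)·(1 + √3·cot(πA₀)) and lim_{ε→0} (Θ₂(A₀, B₀ - ε) - 2)/ε = -(3/8)·(1 + √3·cot(πA₀)). -/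

import Mathlib

/-!
Write `x = π(A+B)/2` and `4πmⱼ/3 = x + π/2 + αⱼ`. Since `e^{-iπA} - e^{iπA} = -2i sin πA` and
`e^{iπA} + e^{iπB} = 2 cos(π(A-B)/2) e^{ix}`,
`K_{m₂}(A) + K_{m₁}(B) = 2e^{ix} (sin πA · e^{iα₂} + sin πB · e^{iα₁} - cos(π(A-B)/2))`.
So the equation says that a triangle with sides `sin πA`, `sin πB`, `cos(π(A-B)/2)` closes up,
and the law of cosines gives `α₁` and `-α₂` as arccosines of smooth functions of `(A, B)`.
On the antidiagonal `A + B = 1` the triangle is equilateral with side `sin πA`, so both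
arccosines equal `π/3`, giving the exponents `1` and `2`; differentiating the law of cosines at
an equilateral triangle gives the slopes along `B`.
-/

open Filter Topology

/-- The jump factor `K_m(A) = -e^{iπA} + e^{-iπA}e^{4πmi/3} - e^{iπA}e^{4πmi/3}`. -/
noncomputable def jumpK (m A : ℝ) : ℂ :=
  -Complex.exp (Complex.I * Real.pi * A) +
    Complex.exp (-(Complex.I * Real.pi * A)) * Complex.exp (4 * Real.pi * m * Complex.I / 3) -
    Complex.exp (Complex.I * Real.pi * A) * Complex.exp (4 * Real.pi * m * Complex.I / 3)

open Complex in
lemma jumpK_eq (m A : ℝ) :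
    jumpK m A = -exp (↑(Real.pi * A) * I)
      - 2 * I * Real.sin (Real.pi * A) * exp (↑(4 * Real.pi * m / 3) * I) := by
  have h := two_sin (↑(Real.pi * A))
  simp only [jumpK, ofReal_sin] at h ⊢
  push_cast at h ⊢
  rw [neg_mul] at h
  rw [show I * Real.pi * A = Real.pi * A * I by ring,
    show 4 * Real.pi * m * I / 3 = 4 * Real.pi * m / 3 * I by ring]
  linear_combination (exp (4 * Real.pi * m / 3 * I) * I) * h
    + exp (4 * Real.pi * m / 3 * I) * (exp (-(Real.pi * A * I)) - exp (Real.pi * A * I)) * I_sq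

open Complex in
lemma exp_mul_I_add_exp_mul_I (u v : ℝ) :
    exp (u * I) + exp (v * I) = 2 * Real.cos ((u - v) / 2) * exp (↑((u + v) / 2) * I) := by
  have h := two_cos (↑((u - v) / 2))
  simp only [ofReal_cos] at h ⊢
  rw [h, add_mul, ← exp_add, ← exp_add]
  push_cast
  ring_nf

/-- The cosine of the angle between the sides `a` and `d` of a triangle with sides `a, b, d`. -/
noncomputable def triangleCos (a b d : ℝ) : ℝ := (a ^ 2 + d ^ 2 - b ^ 2) / (2 * a * d)

lemma triangleCos_add_triangleCos {a b d : ℝ} (ha : a ≠ 0) (hb : b ≠ 0) (hd : d ≠ 0) :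
    a * triangleCos a b d + b * triangleCos b a d = d := by
  unfold triangleCos
  field_simp
  ring

lemma mul_sqrt_one_sub_triangleCos_sq {a b d : ℝ} (ha : 0 < a) (hb : 0 < b) (hd : d ≠ 0) :
    a * √(1 - triangleCos a b d ^ 2) = b * √(1 - triangleCos b a d ^ 2) := by
  have key : a ^ 2 * (1 - triangleCos a b d ^ 2) = b ^ 2 * (1 - triangleCos b a d ^ 2) := by
    unfold triangleCos
    field_simp
    ring
  calc a * √(1 - triangleCos a b d ^ 2) = √(a ^ 2 * (1 - triangleCos a b d ^ 2)) := by
        rw [Real.sqrt_mul (sq_nonneg a), Real.sqrt_sq ha.le]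
    _ = b * √(1 - triangleCos b a d ^ 2) := by
        rw [key, Real.sqrt_mul (sq_nonneg b), Real.sqrt_sq hb.le]

open Complex in
lemma triangle_closes {a b d : ℝ} (ha : 0 < a) (hb : 0 < b) (hd : d ≠ 0)
    (hca : triangleCos a b d ∈ Set.Icc (-1) 1) (hcb : triangleCos b a d ∈ Set.Icc (-1) 1) :
    a * exp (↑(-Real.arccos (triangleCos a b d)) * I)
      + b * exp (↑(Real.arccos (triangleCos b a d)) * I) = d := by
  apply Complex.ext
  · simp only [add_re, re_ofReal_mul, exp_ofReal_mul_I_re, ofReal_re, Real.cos_neg,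
      Real.cos_arccos hca.1 hca.2, Real.cos_arccos hcb.1 hcb.2]
    exact triangleCos_add_triangleCos ha.ne' hb.ne' hd
  · simp only [add_im, im_ofReal_mul, exp_ofReal_mul_I_im, ofReal_im, Real.sin_neg,
      Real.sin_arccos]
    linarith [mul_sqrt_one_sub_triangleCos_sq ha hb hd]

lemma triangleCos_self {a : ℝ} (ha : a ≠ 0) : triangleCos a a a = 1 / 2 := by
  unfold triangleCos
  field_simp
  ring

lemma Real.arccos_one_half : Real.arccos (1 / 2) = Real.pi / 3 := by
  rw [← Real.cos_pi_div_three]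
  exact Real.arccos_cos (by positivity) (by linarith [Real.pi_pos])

lemma Real.hasDerivAt_arccos_one_half : HasDerivAt Real.arccos (-(2 * √3 / 3)) (1 / 2) := by
  refine (Real.hasDerivAt_arccos (by norm_num) (by norm_num)).congr_deriv ?_
  rw [show (1 : ℝ) - (1 / 2) ^ 2 = 3 / 2 ^ 2 by norm_num, Real.sqrt_div' _ (by norm_num),
    Real.sqrt_sq (by norm_num)]
  field_simp
  rw [Real.sq_sqrt (by norm_num)]

lemma DifferentiableAt.triangleCos {E : Type*} [NormedAddCommGroup E] [NormedSpace ℝ E]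
    {a b d : E → ℝ} {x : E} (ha : DifferentiableAt ℝ a x) (hb : DifferentiableAt ℝ b x)
    (hd : DifferentiableAt ℝ d x) (ha0 : a x ≠ 0) (hd0 : d x ≠ 0) :
    DifferentiableAt ℝ (fun y => triangleCos (a y) (b y) (d y)) x := by
  unfold _root_.triangleCos
  fun_prop (disch := simp [ha0, hd0])

lemma HasDerivAt.triangleCos_of_equilateral {a b d : ℝ → ℝ} {a' b' d' S x : ℝ}
    (ha : HasDerivAt a a' x) (hb : HasDerivAt b b' x) (hd : HasDerivAt d d' x)
    (ha0 : a x = S) (hb0 : b x = S) (hd0 : d x = S) (hS : S ≠ 0) :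
    HasDerivAt (fun y => triangleCos (a y) (b y) (d y)) ((a' - 2 * b' + d') / (2 * S)) x := by
  have h := (((ha.pow 2).add (hd.pow 2)).sub (hb.pow 2)).div ((ha.const_mul 2).mul hd)
    (by simp [ha0, hd0, hS])
  refine h.congr_deriv ?_
  simp only [Pi.add_apply, Pi.sub_apply, Pi.pow_apply, Pi.mul_apply, ha0, hb0, hd0]
  field_simp
  ring

lemma exists_abs_add_abs_lt_of_eventually {P : ℝ × ℝ → Prop} {x : ℝ × ℝ}
    (h : ∀ᶠ p in 𝓝 x, P p) : ∃ δ > 0, ∀ p : ℝ × ℝ, |p.1 - x.1| + |p.2 - x.2| < δ → P p := by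
  obtain ⟨δ, hδ, hP⟩ := Metric.eventually_nhds_iff.1 h
  refine ⟨δ, hδ, fun p hp => hP ?_⟩
  rw [Prod.dist_eq, Real.dist_eq, Real.dist_eq]
  exact max_lt (by linarith [abs_nonneg (p.2 - x.2)]) (by linarith [abs_nonneg (p.1 - x.1)])

lemma HasDerivAt.tendsto_sub_div {f : ℝ → ℝ} {f' v : ℝ} (h : HasDerivAt f f' 0) (hv : f 0 = v) :
    Tendsto (fun ε => (f ε - v) / ε) (𝓝[≠] 0) (𝓝 f') :=
  (hasDerivAt_iff_tendsto_slope.1 h).congr fun ε => by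
    rw [slope_def_field, hv, sub_zero]

namespace JumpK

open Real

variable (p : ℝ × ℝ)

noncomputable def jumpExponent (α : ℝ) : ℝ :=
  3 / (4 * π) * (π * (p.1 + p.2) / 2 + π / 2 + α)

open Complex in
theorem exp_jumpExponent (α : ℝ) :
    exp (↑(4 * π * jumpExponent p α / 3) * I)
      = I * exp (↑(π * (p.1 + p.2) / 2) * I) * exp (α * I) := by
  have hπ : (π : ℂ) ≠ 0 := ofReal_ne_zero.mpr pi_ne_zero
  have harg : ↑(4 * π * jumpExponent p α / 3) * I
      = π / 2 * I + (↑(π * (p.1 + p.2) / 2) * I + α * I) := by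
    simp only [jumpExponent]
    push_cast
    field_simp
    ring
  rw [harg, Complex.exp_add, Complex.exp_add, exp_pi_div_two_mul_I, mul_assoc]

noncomputable def sideA : ℝ := sin (π * p.1)

noncomputable def sideB : ℝ := sin (π * p.2)

noncomputable def sideC : ℝ := cos (π * (p.1 - p.2) / 2)

noncomputable def cosA : ℝ := triangleCos (sideA p) (sideB p) (sideC p)

noncomputable def cosB : ℝ := triangleCos (sideB p) (sideA p) (sideC p)

noncomputable def theta₁ : ℝ := jumpExponent p (arccos (cosB p))

/-- The branch `2π - arccos` makes `theta₂ = 2`, not `1/2`, on the antidiagonal. -/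
noncomputable def theta₂ : ℝ := jumpExponent p (2 * π - arccos (cosA p))

structure Nondegenerate : Prop where
  sideA_pos : 0 < sideA p
  sideB_pos : 0 < sideB p
  sideC_pos : 0 < sideC p
  cosA_mem : cosA p ∈ Set.Ioo (-1) 1
  cosB_mem : cosB p ∈ Set.Ioo (-1) 1

variable {p}

open Complex in
theorem jumpK_add_jumpK (α₁ α₂ : ℝ) :
    jumpK (jumpExponent p α₂) p.1 + jumpK (jumpExponent p α₁) p.2
      = 2 * exp (↑(π * (p.1 + p.2) / 2) * I) *
        (sideA p * exp (α₂ * I) + sideB p * exp (α₁ * I) - sideC p) := by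
  have hsum := exp_mul_I_add_exp_mul_I (π * p.1) (π * p.2)
  rw [show (π * p.1 - π * p.2) / 2 = π * (p.1 - p.2) / 2 by ring,
    show (π * p.1 + π * p.2) / 2 = π * (p.1 + p.2) / 2 by ring] at hsum
  rw [jumpK_eq, jumpK_eq, exp_jumpExponent, exp_jumpExponent]
  simp only [sideA, sideB, sideC]
  linear_combination (-1 : ℂ) * hsum - 2 * exp (↑(π * (p.1 + p.2) / 2) * I) *
    (Real.sin (π * p.1) * exp (α₂ * I) + Real.sin (π * p.2) * exp (α₁ * I)) * I_sq

open Complex in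
theorem jumpK_theta₂_add_jumpK_theta₁ (hp : Nondegenerate p) :
    jumpK (theta₂ p) p.1 + jumpK (theta₁ p) p.2 = 0 := by
  have hperiod : exp (↑(2 * π - arccos (cosA p)) * I) = exp (↑(-arccos (cosA p)) * I) := by
    rw [show (↑(2 * π - arccos (cosA p)) * I : ℂ) = ↑(-arccos (cosA p)) * I + 2 * π * I by
      push_cast; ring, exp_periodic]
  have hclose := triangle_closes hp.sideA_pos hp.sideB_pos hp.sideC_pos.ne'
    (Set.Ioo_subset_Icc_self hp.cosA_mem) (Set.Ioo_subset_Icc_self hp.cosB_mem)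
  rw [theta₁, theta₂, jumpK_add_jumpK, hperiod, cosA, cosB, hclose, sub_self, mul_zero]

theorem differentiable_sideA : Differentiable ℝ sideA := by unfold sideA; fun_prop

theorem differentiable_sideB : Differentiable ℝ sideB := by unfold sideB; fun_prop

theorem differentiable_sideC : Differentiable ℝ sideC := by unfold sideC; fun_prop

theorem differentiableAt_cosA (hA : sideA p ≠ 0) (hC : sideC p ≠ 0) :
    DifferentiableAt ℝ cosA p :=
  differentiable_sideA.differentiableAt.triangleCos differentiable_sideB.differentiableAt
    differentiable_sideC.differentiableAt hA hC

theorem differentiableAt_cosB (hB : sideB p ≠ 0) (hC : sideC p ≠ 0) :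
    DifferentiableAt ℝ cosB p :=
  differentiable_sideB.differentiableAt.triangleCos differentiable_sideA.differentiableAt
    differentiable_sideC.differentiableAt hB hC

theorem differentiableAt_jumpExponent {α : ℝ × ℝ → ℝ} (hα : DifferentiableAt ℝ α p) :
    DifferentiableAt ℝ (fun q => jumpExponent q (α q)) p := by
  unfold jumpExponent
  fun_prop

theorem Nondegenerate.differentiableAt_theta₁ (hp : Nondegenerate p) :
    DifferentiableAt ℝ theta₁ p :=
  differentiableAt_jumpExponent <|
    (differentiableAt_arccos.2 ⟨hp.cosB_mem.1.ne', hp.cosB_mem.2.ne⟩).comp p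
      (differentiableAt_cosB hp.sideB_pos.ne' hp.sideC_pos.ne')

theorem Nondegenerate.differentiableAt_theta₂ (hp : Nondegenerate p) :
    DifferentiableAt ℝ theta₂ p :=
  differentiableAt_jumpExponent <| (differentiableAt_const _).sub <|
    (differentiableAt_arccos.2 ⟨hp.cosA_mem.1.ne', hp.cosA_mem.2.ne⟩).comp p
      (differentiableAt_cosA hp.sideA_pos.ne' hp.sideC_pos.ne')

variable {A : ℝ}

theorem sideB_antidiagonal (A : ℝ) : sideB (A, 1 - A) = sideA (A, 1 - A) := by
  rw [sideB, sideA, mul_one_sub, sin_pi_sub]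

theorem sideC_antidiagonal (A : ℝ) : sideC (A, 1 - A) = sideA (A, 1 - A) := by
  rw [sideC, sideA, ← cos_pi_div_two_sub, ← cos_neg]
  ring_nf

theorem cosA_antidiagonal (hA : sin (π * A) ≠ 0) : cosA (A, 1 - A) = 1 / 2 := by
  rw [cosA, sideB_antidiagonal, sideC_antidiagonal]
  exact triangleCos_self hA

theorem cosB_antidiagonal (hA : sin (π * A) ≠ 0) : cosB (A, 1 - A) = 1 / 2 := by
  rw [cosB, sideB_antidiagonal, sideC_antidiagonal]
  exact triangleCos_self hA

theorem theta₁_antidiagonal (hA : sin (π * A) ≠ 0) : theta₁ (A, 1 - A) = 1 := by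
  rw [theta₁, cosB_antidiagonal hA, arccos_one_half, jumpExponent]
  field_simp
  ring

theorem theta₂_antidiagonal (hA : sin (π * A) ≠ 0) : theta₂ (A, 1 - A) = 2 := by
  rw [theta₂, cosA_antidiagonal hA, arccos_one_half, jumpExponent]
  field_simp
  ring

theorem eventually_nondegenerate (hS : 0 < sin (π * A)) :
    ∀ᶠ p in 𝓝 (A, 1 - A), Nondegenerate p := by
  have hA₀ : 0 < sideA (A, 1 - A) := hS
  have hB₀ : 0 < sideB (A, 1 - A) := by rwa [sideB_antidiagonal]
  have hC₀ : 0 < sideC (A, 1 - A) := by rwa [sideC_antidiagonal]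
  have hcA₀ : cosA (A, 1 - A) ∈ Set.Ioo (-1) 1 := by rw [cosA_antidiagonal hS.ne']; norm_num
  have hcB₀ : cosB (A, 1 - A) ∈ Set.Ioo (-1) 1 := by rw [cosB_antidiagonal hS.ne']; norm_num
  filter_upwards [differentiable_sideA.continuous.continuousAt.eventually (lt_mem_nhds hA₀),
    differentiable_sideB.continuous.continuousAt.eventually (lt_mem_nhds hB₀),
    differentiable_sideC.continuous.continuousAt.eventually (lt_mem_nhds hC₀),
    (differentiableAt_cosA hA₀.ne' hC₀.ne').continuousAt.eventually_mem
      (isOpen_Ioo.mem_nhds hcA₀),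
    (differentiableAt_cosB hB₀.ne' hC₀.ne').continuousAt.eventually_mem
      (isOpen_Ioo.mem_nhds hcB₀)]
    with p hA hB hC hcA hcB
  exact ⟨hA, hB, hC, hcA, hcB⟩

theorem hasDerivAt_sideB_line (A : ℝ) :
    HasDerivAt (fun ε => sideB (A, 1 - A - ε)) (π * cos (π * A)) 0 := by
  have h := (((hasDerivAt_id (0 : ℝ)).const_sub (1 - A)).const_mul π).sin
  refine h.congr_deriv ?_
  rw [id, sub_zero, mul_one_sub, cos_pi_sub]
  ring

theorem hasDerivAt_sideC_line (A : ℝ) :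
    HasDerivAt (fun ε => sideC (A, 1 - A - ε)) (π / 2 * cos (π * A)) 0 := by
  have h := ((((hasDerivAt_id (0 : ℝ)).const_sub (1 - A)).const_sub A).const_mul π).div_const 2
    |>.cos
  refine h.congr_deriv ?_
  rw [id, sub_zero, show π * (A - (1 - A)) / 2 = -(π / 2 - π * A) by ring, sin_neg,
    sin_pi_div_two_sub]
  ring

theorem hasDerivAt_cosA_line (hA : sin (π * A) ≠ 0) :
    HasDerivAt (fun ε => cosA (A, 1 - A - ε)) (-(3 * π / 4) * cot (π * A)) 0 := by
  have h := (hasDerivAt_const (0 : ℝ) (sideA (A, 1 - A))).triangleCos_of_equilateral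
    (hasDerivAt_sideB_line A) (hasDerivAt_sideC_line A) rfl
    (by rw [sub_zero, sideB_antidiagonal]) (by rw [sub_zero, sideC_antidiagonal]) hA
  refine h.congr_deriv ?_
  rw [cot_eq_cos_div_sin, sideA]
  field_simp
  ring

theorem hasDerivAt_cosB_line (hA : sin (π * A) ≠ 0) :
    HasDerivAt (fun ε => cosB (A, 1 - A - ε)) (3 * π / 4 * cot (π * A)) 0 := by
  have h := (hasDerivAt_sideB_line A).triangleCos_of_equilateral
    (hasDerivAt_const (0 : ℝ) (sideA (A, 1 - A))) (hasDerivAt_sideC_line A)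
    (by rw [sub_zero, sideB_antidiagonal]) rfl (by rw [sub_zero, sideC_antidiagonal]) hA
  refine h.congr_deriv ?_
  rw [cot_eq_cos_div_sin, sideA]
  field_simp
  ring

theorem hasDerivAt_jumpExponent_line {α : ℝ → ℝ} {α' : ℝ} (hα : HasDerivAt α α' 0) :
    HasDerivAt (fun ε => jumpExponent (A, 1 - A - ε) (α ε)) (3 / (4 * π) * (α' - π / 2)) 0 := by
  have h := (((((hasDerivAt_id (0 : ℝ)).const_sub (1 - A)).const_add A).const_mul π).div_const 2
    |>.add_const (π / 2) |>.add hα).const_mul (3 / (4 * π))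
  exact h.congr_deriv (by ring)

theorem hasDerivAt_theta₁_line (hA : sin (π * A) ≠ 0) :
    HasDerivAt (fun ε => theta₁ (A, 1 - A - ε)) (-(3 / 8) * (1 + √3 * cot (π * A))) 0 := by
  have hα := hasDerivAt_arccos_one_half.comp_of_eq 0 (hasDerivAt_cosB_line hA)
    (by rw [sub_zero, cosB_antidiagonal hA])
  refine (hasDerivAt_jumpExponent_line hα).congr_deriv ?_
  field_simp
  ring

theorem hasDerivAt_theta₂_line (hA : sin (π * A) ≠ 0) :
    HasDerivAt (fun ε => theta₂ (A, 1 - A - ε)) (-(3 / 8) * (1 + √3 * cot (π * A))) 0 := by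
  have hα := (hasDerivAt_arccos_one_half.comp_of_eq 0 (hasDerivAt_cosA_line hA)
    (by rw [sub_zero, cosA_antidiagonal hA])).const_sub (2 * π)
  refine (hasDerivAt_jumpExponent_line hα).congr_deriv ?_
  field_simp
  ring

end JumpK

/-- Local structure of the set `{K_m(A) + K_n(B) = 0}` near `(A₀, B₀, 1, 2)` with
`A₀ + B₀ = 1`: there are differentiable functions `Θ₁, Θ₂` with `Θ₁(A₀,B₀) = 1`,
`Θ₂(A₀,B₀) = 2`, `K_{Θ₂(A,B)}(A) + K_{Θ₁(A,B)}(B) = 0` near `(A₀,B₀)`, and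
`(Θᵢ(A₀,B₀-ε) - i)/ε → -(3/8)(1 + √3·cot(πA₀))` as `ε → 0`. -/
theorem jumpK_implicit_functions
    (A₀ B₀ : ℝ) (hA₀ : 0 < A₀) (hB₀ : 0 < B₀) (hsum : A₀ + B₀ = 1) :
    ∃ δ > (0 : ℝ), ∃ Θ₁ Θ₂ : ℝ × ℝ → ℝ,
      DifferentiableOn ℝ Θ₁ {p : ℝ × ℝ | |p.1 - A₀| + |p.2 - B₀| < δ} ∧
      DifferentiableOn ℝ Θ₂ {p : ℝ × ℝ | |p.1 - A₀| + |p.2 - B₀| < δ} ∧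
      Θ₁ (A₀, B₀) = 1 ∧ Θ₂ (A₀, B₀) = 2 ∧
      (∀ p : ℝ × ℝ, |p.1 - A₀| + |p.2 - B₀| < δ →
        jumpK (Θ₂ p) p.1 + jumpK (Θ₁ p) p.2 = 0) ∧
      Tendsto (fun ε : ℝ => (Θ₁ (A₀, B₀ - ε) - 1) / ε) (𝓝[≠] (0 : ℝ))
        (𝓝 (-(3/8) * (1 + Real.sqrt 3 * Real.cot (Real.pi * A₀)))) ∧
      Tendsto (fun ε : ℝ => (Θ₂ (A₀, B₀ - ε) - 2) / ε) (𝓝[≠] (0 : ℝ))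
        (𝓝 (-(3/8) * (1 + Real.sqrt 3 * Real.cot (Real.pi * A₀)))) := by
  obtain rfl : B₀ = 1 - A₀ := by linarith
  have hS : 0 < Real.sin (Real.pi * A₀) :=
    Real.sin_pos_of_pos_of_lt_pi (by positivity) (by nlinarith [Real.pi_pos])
  obtain ⟨δ, hδ, hp⟩ := exists_abs_add_abs_lt_of_eventually (JumpK.eventually_nondegenerate hS)
  have h₁ := JumpK.theta₁_antidiagonal hS.ne'
  have h₂ := JumpK.theta₂_antidiagonal hS.ne'
  refine ⟨δ, hδ, JumpK.theta₁, JumpK.theta₂,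
    fun p h => (hp p h).differentiableAt_theta₁.differentiableWithinAt,
    fun p h => (hp p h).differentiableAt_theta₂.differentiableWithinAt, h₁, h₂,
    fun p h => JumpK.jumpK_theta₂_add_jumpK_theta₁ (hp p h),
    (JumpK.hasDerivAt_theta₁_line hS.ne').tendsto_sub_div (by rwa [sub_zero]),
    (JumpK.hasDerivAt_theta₂_line hS.ne').tendsto_sub_div (by rwa [sub_zero])⟩
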